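/- Stanley–Reisner complexes of polarizations of primary monomial ideals are vertex-decomposable. -/

import Mathlib

open MvPolynomial

structure SComplex (V : Type*) where
  faces : Set (Finset V)
  down_closed : ∀ {F G : Finset V}, F ∈ faces → G ⊆ F → G ∈ faces

namespace SComplex

variable {V : Type*} [DecidableEq V]

def del (K : SComplex V) (x : V) : SComplex V where
  faces := {F | F ∈ K.faces ∧ x ∉ F}
  down_closed := fun hF hG => ⟨K.down_closed hF.1 hG, fun hx => hF.2 (hG hx)⟩

def link (K : SComplex V) (x : V) : SComplex V where
  faces := {F | F ∈ K.faces ∧ x ∉ F ∧ insert x F ∈ K.faces}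
  down_closed := fun hF hG =>
    ⟨K.down_closed hF.1 hG, fun hx => hF.2.1 (hG hx),
      K.down_closed hF.2.2 (Finset.insert_subset_insert _ hG)⟩

/-- Vertex decomposability; `VDec K d` says that `K` is a pure `(d-1)`-dimensional
vertex-decomposable complex (its facets have cardinality `d`): either `K` is a
simplex, or some vertex `x` has a vertex-decomposable link of facet-cardinality
`d - 1` and a vertex-decomposable deletion of facet-cardinality `d`. -/
inductive VDec : SComplex V → ℕ → Prop where
  | simplex (K : SComplex V) (S : Finset V) (d : ℕ) (hcard : S.card = d)
      (hf : K.faces = {F | F ⊆ S}) : VDec K d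
  | step (K : SComplex V) (d : ℕ) (x : V)
      (hpure : ∀ F ∈ K.faces, ∃ G ∈ K.faces, F ⊆ G ∧ G.card = d)
      (hlink : VDec (K.link x) (d - 1))
      (hdel : VDec (K.del x) d) : VDec K d

def VertexDecomposable (K : SComplex V) : Prop := ∃ d, VDec K d

end SComplex

variable (k : Type*) [Field k] {c : ℕ} (n : Fin c → ℕ)

/-- The polarization of the monomial with exponent vector `g`:
the set of polarized variables `x_{i,j}` with `j < g i`. -/
def polSupp (g : Fin c → ℕ) : Finset ((i : Fin c) × Fin (n i)) :=
  Finset.univ.filter fun v => (v.2 : ℕ) < g v.1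

/-
Generalize to the polarization shifted by `t`, which replaces `x_i^a` by
`x_{i,t i} ⋯ x_{i,t i + a - 1}`, on the vertices `x_{i,j}` with `j ≥ t i`. If every `x_i` is
a generator, this complex is a simplex. Otherwise choose `i` with `x_i` not a generator and shed
the vertex `x_{i,t i}`: its link corresponds to `(I : x_{i,t i})`, the shifted polarization of
the generators divided by `x_i` with the shift raised at `i`; its deletion corresponds to
`(I, x_{i,t i})`, generated by `x_i` and the generators prime to `x_i`. Both are again
polarizations of primary ideals, with a smaller sum of generator degrees. Purity: a face extends
to the facet that omits from each column only its first missing vertex.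
-/

open Finset

section SquarefreeMonomial

variable {σ R : Type*} [CommSemiring R]

lemma prod_X_eq_monomial (F : Finset σ) :
    ∏ v ∈ F, (X v : MvPolynomial σ R) = monomial (∑ v ∈ F, Finsupp.single v 1) 1 := by
  rw [monomial_sum_one]; rfl

lemma sum_single_one_le_iff {F G : Finset σ} :
    ∑ v ∈ F, Finsupp.single v 1 ≤ ∑ v ∈ G, Finsupp.single v 1 ↔ F ⊆ G := by
  classical
  rw [← (Finsupp.orderIsoMultiset (ι := σ)).le_iff_le, Finsupp.coe_orderIsoMultiset,
    Finsupp.toMultiset_sum_single, Finsupp.toMultiset_sum_single, one_nsmul, one_nsmul,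
    Finset.val_le_iff]

lemma prod_X_mem_span_prod_X_image_iff [Nontrivial R] {ι : Type*} (S : ι → Finset σ) (A : Set ι)
    (F : Finset σ) :
    ∏ v ∈ F, (X v : MvPolynomial σ R) ∈ Ideal.span ((fun a => ∏ v ∈ S a, X v) '' A) ↔
      ∃ a ∈ A, S a ⊆ F := by
  classical
  simp_rw [prod_X_eq_monomial]
  rw [← Set.image_image (fun s => monomial s (1 : R)) (fun a => ∑ v ∈ S a, Finsupp.single v 1),
    mem_ideal_span_monomial_image, support_monomial, if_neg one_ne_zero]
  simp [sum_single_one_le_iff]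

end SquarefreeMonomial

lemma card_filter_le_val (m a : ℕ) : #{j : Fin m | a ≤ (j : ℕ)} = m - a := by
  have := card_filter_add_card_filter_not (s := (univ : Finset (Fin m))) (fun j => (j : ℕ) < a)
  simp only [not_lt, Fin.card_filter_val_lt, card_univ, Fintype.card_fin] at this
  omega

theorem SComplex.ext {V : Type*} {K L : SComplex V} (h : K.faces = L.faces) : K = L := by
  cases K; cases L; simpa using h

def shiftedVars (t : Fin c → ℕ) : Finset ((i : Fin c) × Fin (n i)) :=
  univ.sigma fun i => {j : Fin (n i) | t i ≤ j}

def shiftedPolSupp (t g : Fin c → ℕ) : Finset ((i : Fin c) × Fin (n i)) :=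
  univ.sigma fun i => {j : Fin (n i) | t i ≤ j ∧ (j : ℕ) < t i + g i}

def shiftedPolComplex (t : Fin c → ℕ) (A : Finset (Fin c → ℕ)) :
    SComplex ((i : Fin c) × Fin (n i)) where
  faces := {F | F ⊆ shiftedVars n t ∧ ∀ g ∈ A, ¬ shiftedPolSupp n t g ⊆ F}
  down_closed hF hGF := ⟨hGF.trans hF.1, fun g hg h => hF.2 g hg (h.trans hGF)⟩

section ShiftedPolarization

variable {n} {t g : Fin c → ℕ} {A : Finset (Fin c → ℕ)} {v : (i : Fin c) × Fin (n i)}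

@[simp]
lemma mem_shiftedVars : v ∈ shiftedVars n t ↔ t v.1 ≤ v.2 := by
  simp [shiftedVars]

@[simp]
lemma mem_shiftedPolSupp : v ∈ shiftedPolSupp n t g ↔ t v.1 ≤ v.2 ∧ (v.2 : ℕ) < t v.1 + g v.1 := by
  simp [shiftedPolSupp]

lemma shiftedPolSupp_zero : shiftedPolSupp n 0 g = polSupp n g := by
  ext v
  simp [polSupp]

@[simp]
lemma shiftedVars_zero : shiftedVars n 0 = univ := by
  ext v
  simp

lemma card_shiftedVars : #(shiftedVars n t) = ∑ i, (n i - t i) := by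
  simp only [shiftedVars, card_sigma, card_filter_le_val]

lemma mk_mem_shiftedPolSupp_iff {i : Fin c} (h : t i < n i) :
    ⟨i, ⟨t i, h⟩⟩ ∈ shiftedPolSupp n t g ↔ g i ≠ 0 := by
  simp [Nat.pos_iff_ne_zero]

lemma shiftedPolSupp_single {i : Fin c} (h : t i < n i) :
    shiftedPolSupp n t (Pi.single i 1) = {⟨i, ⟨t i, h⟩⟩} := by
  ext ⟨i', j⟩
  rcases eq_or_ne i' i with rfl | hi
  · simp [Fin.ext_iff]
    omega
  · simp [hi]

lemma shiftedVars_add_single {i : Fin c} (h : t i < n i) :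
    shiftedVars n (t + Pi.single i 1) = (shiftedVars n t).erase ⟨i, ⟨t i, h⟩⟩ := by
  ext ⟨i', j⟩
  rcases eq_or_ne i' i with rfl | hi
  · simp [Fin.ext_iff]
    omega
  · simp [hi]

lemma shiftedPolSupp_add_single_sub_single {i : Fin c} (h : t i < n i) :
    shiftedPolSupp n (t + Pi.single i 1) (g - Pi.single i 1) =
      (shiftedPolSupp n t g).erase ⟨i, ⟨t i, h⟩⟩ := by
  ext ⟨i', j⟩
  rcases eq_or_ne i' i with rfl | hi
  · simp [Fin.ext_iff]
    omega
  · simp [hi]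

end ShiftedPolarization

section ShiftedPolComplex

variable {n} {t : Fin c → ℕ} {A : Finset (Fin c → ℕ)} {F : Finset ((i : Fin c) × Fin (n i))}

lemma mem_faces_shiftedPolComplex :
    F ∈ (shiftedPolComplex n t A).faces ↔
      F ⊆ shiftedVars n t ∧ ∀ g ∈ A, ¬ shiftedPolSupp n t g ⊆ F :=
  Iff.rfl

lemma link_shiftedPolComplex {i : Fin c} (h : t i < n i) :
    (shiftedPolComplex n t A).link ⟨i, ⟨t i, h⟩⟩ =
      shiftedPolComplex n (t + Pi.single i 1) (A.image (· - Pi.single i 1)) := by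
  refine SComplex.ext (Set.ext fun F => ?_)
  simp only [SComplex.link, Set.mem_ofPred_eq, mem_faces_shiftedPolComplex, forall_mem_image,
    shiftedVars_add_single h, shiftedPolSupp_add_single_sub_single h, subset_erase,
    ← subset_insert_iff, insert_subset_iff, mem_shiftedVars, le_refl, true_and]
  refine ⟨fun ⟨_, hx, hF, hA⟩ => ⟨⟨hF, hx⟩, hA⟩, fun ⟨⟨hF, hx⟩, hA⟩ => ⟨⟨hF, ?_⟩, hx, hF, hA⟩⟩
  exact fun g hg hgF => hA g hg (hgF.trans (subset_insert _ _))

lemma del_shiftedPolComplex {i : Fin c} (h : t i < n i) :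
    (shiftedPolComplex n t A).del ⟨i, ⟨t i, h⟩⟩ =
      shiftedPolComplex n t (insert (Pi.single i 1) {g ∈ A | g i = 0}) := by
  refine SComplex.ext (Set.ext fun F => ?_)
  simp only [SComplex.del, Set.mem_ofPred_eq, mem_faces_shiftedPolComplex, forall_mem_insert,
    mem_filter, and_imp, shiftedPolSupp_single h, singleton_subset_iff]
  refine ⟨fun ⟨⟨hF, hA⟩, hx⟩ => ⟨hF, hx, fun g hg _ => hA g hg⟩,
    fun ⟨hF, hx, hA⟩ => ⟨⟨hF, fun g hg hgF => ?_⟩, hx⟩⟩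
  by_cases hgi : g i = 0
  · exact hA g hg hgi hgF
  · exact hx (hgF ((mk_mem_shiftedPolSupp_iff h).2 hgi))

lemma faces_shiftedPolComplex_of_single_mem (hA0 : ∀ g ∈ A, g ≠ 0) (ht : ∀ i, t i < n i)
    (hA : ∀ i, Pi.single i 1 ∈ A) :
    (shiftedPolComplex n t A).faces = {F | F ⊆ shiftedVars n (t + 1)} := by
  ext F
  simp only [Set.mem_ofPred_eq, mem_faces_shiftedPolComplex]
  constructor
  · rintro ⟨hF, hFA⟩ ⟨i, j⟩ hv
    have hj : t i ≤ j := mem_shiftedVars.1 (hF hv)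
    have hne : (⟨i, j⟩ : (i : Fin c) × Fin (n i)) ≠ ⟨i, ⟨t i, ht i⟩⟩ := fun he =>
      hFA _ (hA i) (by rw [shiftedPolSupp_single (ht i), singleton_subset_iff, ← he]; exact hv)
    simp only [ne_eq, Sigma.mk.injEq, heq_eq_eq, true_and, Fin.ext_iff] at hne
    simp only [mem_shiftedVars, Pi.add_apply, Pi.one_apply]
    omega
  · intro hF
    refine ⟨hF.trans fun v hv => ?_, fun g hg hgF => ?_⟩
    · simp only [mem_shiftedVars, Pi.add_apply, Pi.one_apply] at hv ⊢
      omega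
    · obtain ⟨i, hi⟩ := Function.ne_iff.1 (hA0 g hg)
      have := mem_shiftedVars.1 (hF (hgF ((mk_mem_shiftedPolSupp_iff (ht i)).2 hi)))
      simp at this

lemma exists_first_gap (hF : F ∈ (shiftedPolComplex n t A).faces) {i : Fin c}
    (hpow : ∃ g ∈ A, (∀ j, j ≠ i → g j = 0) ∧ g i ≠ 0) :
    ∃ j : Fin (n i), t i ≤ j ∧ ⟨i, j⟩ ∉ F ∧
      ∀ j' : Fin (n i), t i ≤ j' → j' < j → ⟨i, j'⟩ ∈ F := by
  obtain ⟨g, hg, hg0, hgi⟩ := hpow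
  obtain ⟨⟨i', j⟩, hv, hvF⟩ := not_subset.1 (hF.2 g hg)
  obtain rfl : i' = i := by
    by_contra hi'
    have := mem_shiftedPolSupp.1 hv
    simp only [hg0 i' hi'] at this
    omega
  have hgap : ({j : Fin (n i') | t i' ≤ j ∧ ⟨i', j⟩ ∉ F} : Finset _).Nonempty :=
    ⟨j, by simpa using ⟨(mem_shiftedPolSupp.1 hv).1, hvF⟩⟩
  obtain ⟨j₀, hj₀, hmin⟩ := exists_min_image _ id hgap
  simp only [mem_filter, mem_univ, true_and, id] at hj₀ hmin
  exact ⟨j₀, hj₀.1, hj₀.2, fun j' hj' hlt => by_contra fun hj'F => (hmin j' ⟨hj', hj'F⟩).not_gt hlt⟩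

lemma exists_superset_card_eq (hpow : ∀ i, ∃ g ∈ A, (∀ j, j ≠ i → g j = 0) ∧ g i ≠ 0)
    (hF : F ∈ (shiftedPolComplex n t A).faces) :
    ∃ G ∈ (shiftedPolComplex n t A).faces, F ⊆ G ∧ #G = ∑ i, (n i - (t i + 1)) := by
  choose jf hjt hjF hjmin using fun i => exists_first_gap hF (hpow i)
  refine ⟨univ.sigma fun i => ({j : Fin (n i) | t i ≤ j} : Finset _).erase (jf i), ⟨?_, ?_⟩, ?_, ?_⟩
  · intro v hv
    simp only [mem_sigma, mem_univ, mem_erase, mem_filter, true_and] at hv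
    exact mem_shiftedVars.2 hv.2
  · intro g hg hgG
    refine hF.2 g hg fun ⟨i, j⟩ hv => by_contra fun hjF' => ?_
    have hv' := mem_shiftedPolSupp.1 hv
    have hle : jf i ≤ j := not_lt.1 fun hlt => hjF' (hjmin i j hv'.1 hlt)
    -- the support of `g` is an initial segment of each column, so it reaches `jf i`
    have hmem : (⟨i, jf i⟩ : (i : Fin c) × Fin (n i)) ∈ shiftedPolSupp n t g := by
      simp only [mem_shiftedPolSupp, Fin.le_def] at hv' hle ⊢
      exact ⟨hjt i, by omega⟩
    simpa using hgG hmem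
  · rintro ⟨i, j⟩ hv
    simp only [mem_sigma, mem_univ, mem_erase, mem_filter, true_and]
    exact ⟨fun h => hjF i (h ▸ hv), mem_shiftedVars.1 (hF.1 hv)⟩
  · rw [card_sigma]
    refine sum_congr rfl fun i _ => ?_
    rw [card_erase_of_mem (by simpa using hjt i), card_filter_le_val, Nat.sub_sub]

end ShiftedPolComplex

section SumDegrees

variable {ι : Type*} [DecidableEq ι] {i : ι}

lemma eq_single_one_of_le_single {g : ι → ℕ} (hle : g ≤ Pi.single i 1) (h0 : g ≠ 0) :
    g = Pi.single i 1 := by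
  have hoff : ∀ j, j ≠ i → g j = 0 := fun j hj => by simpa [hj] using hle j
  have hi : g i ≠ 0 := fun hi => h0 (funext fun j => by
    rcases eq_or_ne j i with rfl | hj
    exacts [hi, hoff j hj])
  funext j
  rcases eq_or_ne j i with rfl | hj
  · have := hle j
    simp only [Pi.single_eq_same] at this ⊢
    omega
  · simp [hj, hoff j hj]

variable [Fintype ι]

def sumDegrees (A : Finset (ι → ℕ)) : ℕ := ∑ g ∈ A, ∑ j, g j

lemma sumDegrees_image_sub_single_lt {A : Finset (ι → ℕ)} {p : ι → ℕ} (hp : p ∈ A)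
    (hpi : p i ≠ 0) : sumDegrees (A.image (· - Pi.single i 1)) < sumDegrees A :=
  calc sumDegrees (A.image (· - Pi.single i 1))
      ≤ ∑ g ∈ A, ∑ j, (g - Pi.single i 1 : ι → ℕ) j :=
        sum_image_le_of_nonneg fun _ _ => Nat.zero_le _
    _ < sumDegrees A :=
      sum_lt_sum (fun _ _ => sum_le_sum fun _ _ => tsub_le_self)
        ⟨p, hp, sum_lt_sum (fun _ _ => tsub_le_self) ⟨i, mem_univ _, by simp; omega⟩⟩

lemma sumDegrees_insert_single_filter_lt {A : Finset (ι → ℕ)} {p : ι → ℕ} (hp : p ∈ A)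
    (hpi : 2 ≤ p i) : sumDegrees (insert (Pi.single i 1) {g ∈ A | g i = 0}) < sumDegrees A := by
  have hsub : {g ∈ A | g i = 0} ⊆ A.erase p := fun g hg => by
    simp only [mem_filter, mem_erase] at hg ⊢
    exact ⟨by rintro rfl; omega, hg.1⟩
  calc sumDegrees (insert (Pi.single i 1) {g ∈ A | g i = 0})
      = 1 + sumDegrees {g ∈ A | g i = 0} := by
        rw [sumDegrees, sum_insert (by simp), Finset.sum_pi_single']
        simp [sumDegrees]
    _ ≤ 1 + sumDegrees (A.erase p) := by grw [sumDegrees, sumDegrees, sum_le_sum_of_subset hsub]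
    _ < ∑ j, p j + sumDegrees (A.erase p) := by
        have := single_le_sum (f := p) (fun _ _ => Nat.zero_le _) (mem_univ i)
        omega
    _ = sumDegrees A := add_sum_erase _ _ hp

end SumDegrees

structure IsShiftedPrimary (t : Fin c → ℕ) (A : Finset (Fin c → ℕ)) : Prop where
  add_le : ∀ g ∈ A, ∀ i, t i + g i ≤ n i
  ne_zero : ∀ g ∈ A, g ≠ 0
  exists_pure_pow : ∀ i, ∃ g ∈ A, (∀ j, j ≠ i → g j = 0) ∧ g i ≠ 0

namespace IsShiftedPrimary

variable {n} {t : Fin c → ℕ} {A : Finset (Fin c → ℕ)} {i : Fin c}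

lemma lt (h : IsShiftedPrimary n t A) (i : Fin c) : t i < n i := by
  obtain ⟨g, hg, -, hgi⟩ := h.exists_pure_pow i
  have := h.add_le g hg i
  omega

lemma exists_pure_pow_two_le (h : IsShiftedPrimary n t A) (hi : Pi.single i 1 ∉ A) :
    ∃ p ∈ A, (∀ j, j ≠ i → p j = 0) ∧ 2 ≤ p i := by
  obtain ⟨p, hp, hp0, hpi⟩ := h.exists_pure_pow i
  refine ⟨p, hp, hp0, not_lt.1 fun hlt => hi ?_⟩
  convert hp
  refine (eq_single_one_of_le_single (fun j => ?_) (h.ne_zero p hp)).symm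
  rcases eq_or_ne j i with rfl | hj
  · simpa using Nat.le_of_lt_succ hlt
  · simp [hp0 j hj]

lemma image_sub_single (h : IsShiftedPrimary n t A) (hi : Pi.single i 1 ∉ A) :
    IsShiftedPrimary n (t + Pi.single i 1) (A.image (· - Pi.single i 1)) where
  add_le := by
    obtain ⟨p, hp, -, hp2⟩ := h.exists_pure_pow_two_le hi
    have hti := h.add_le p hp i
    simp only [mem_image, forall_exists_index, and_imp, forall_apply_eq_imp_iff₂]
    intro g hg j
    have := h.add_le g hg j
    rcases eq_or_ne j i with rfl | hj
    · simp only [Pi.add_apply, Pi.sub_apply, Pi.single_eq_same]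
      omega
    · simpa [hj] using this
  ne_zero := by
    simp only [mem_image, forall_exists_index, and_imp, forall_apply_eq_imp_iff₂]
    intro g hg hg0
    exact hi (eq_single_one_of_le_single (tsub_eq_zero_iff_le.1 hg0) (h.ne_zero g hg) ▸ hg)
  exists_pure_pow j := by
    rcases eq_or_ne j i with rfl | hj
    · obtain ⟨p, hp, hp0, hp2⟩ := h.exists_pure_pow_two_le hi
      refine ⟨p - Pi.single j 1, mem_image_of_mem _ hp, fun j' hj' => ?_, ?_⟩
      · simp [hj', hp0 j' hj']
      · simp only [Pi.sub_apply, Pi.single_eq_same]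
        omega
    · obtain ⟨p, hp, hp0, hpj⟩ := h.exists_pure_pow j
      exact ⟨p - Pi.single i 1, mem_image_of_mem _ hp, fun j' hj' => by simp [hp0 j' hj'],
        by simpa [hj] using hpj⟩

lemma insert_single_filter (h : IsShiftedPrimary n t A) (i : Fin c) :
    IsShiftedPrimary n t (insert (Pi.single i 1) {g ∈ A | g i = 0}) where
  add_le := by
    simp only [forall_mem_insert, mem_filter, and_imp]
    refine ⟨fun j => ?_, fun g hg _ => h.add_le g hg⟩
    have := h.lt j
    rcases eq_or_ne j i with rfl | hj
    · simpa using this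
    · simpa [hj] using this.le
  ne_zero := by
    simp only [forall_mem_insert, mem_filter, and_imp]
    exact ⟨by simp, fun g hg _ => h.ne_zero g hg⟩
  exists_pure_pow j := by
    rcases eq_or_ne j i with rfl | hj
    · exact ⟨Pi.single j 1, mem_insert_self _ _, fun j' hj' => by simp [hj'], by simp⟩
    · obtain ⟨p, hp, hp0, hpj⟩ := h.exists_pure_pow j
      exact ⟨p, mem_insert_of_mem (mem_filter.2 ⟨hp, hp0 i hj.symm⟩), hp0, hpj⟩

end IsShiftedPrimary

lemma sum_sub_add_single_add_one {t : Fin c → ℕ} {i : Fin c} (h : t i + 2 ≤ n i) :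
    ∑ j, (n j - ((t + Pi.single i 1 : Fin c → ℕ) j + 1)) + 1 = ∑ j, (n j - (t j + 1)) := by
  have hsingle : ∑ j, (Pi.single i 1 : Fin c → ℕ) j = 1 := by simp
  rw [← hsingle, ← sum_add_distrib]
  refine sum_congr rfl fun j _ => ?_
  rcases eq_or_ne j i with rfl | hj
  · simp only [Pi.add_apply, Pi.single_eq_same]
    omega
  · simp [hj]

theorem vDec_shiftedPolComplex {t : Fin c → ℕ} {A : Finset (Fin c → ℕ)}
    (h : IsShiftedPrimary n t A) :
    (shiftedPolComplex n t A).VDec (∑ i, (n i - (t i + 1))) := by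
  by_cases hA : ∀ i, Pi.single i 1 ∈ A
  · refine .simplex _ (shiftedVars n (t + 1)) _ ?_
      (faces_shiftedPolComplex_of_single_mem h.ne_zero h.lt hA)
    simp [card_shiftedVars]
  push Not at hA
  obtain ⟨i, hi⟩ := hA
  obtain ⟨p, hp, -, hp2⟩ := h.exists_pure_pow_two_le hi
  have hti : t i + 2 ≤ n i := by
    have := h.add_le p hp i
    omega
  refine .step _ _ ⟨i, ⟨t i, h.lt i⟩⟩ (fun F hF => exists_superset_card_eq h.exists_pure_pow hF)
    ?_ ?_
  · rw [link_shiftedPolComplex, ← sum_sub_add_single_add_one n hti, Nat.add_sub_cancel]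
    exact vDec_shiftedPolComplex (h.image_sub_single hi)
  · rw [del_shiftedPolComplex]
    exact vDec_shiftedPolComplex (h.insert_single_filter i)
termination_by sumDegrees A
decreasing_by
  · exact sumDegrees_image_sub_single_lt hp (by omega : p i ≠ 0)
  · exact sumDegrees_insert_single_filter_lt hp hp2

theorem SR_of_polarization_of_primary_is_vertexDecomposable
    (A : Finset (Fin c → ℕ))
    (hbound : ∀ g ∈ A, ∀ i, g i ≤ n i)
    (hne : ∀ g ∈ A, g ≠ 0)
    (hprimary : ∀ i, ∃ g ∈ A, (∀ j, j ≠ i → g j = 0) ∧ g i ≠ 0)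
    (I : Ideal (MvPolynomial ((i : Fin c) × Fin (n i)) k))
    (hI : I = Ideal.span ((fun g => ∏ v ∈ polSupp n g, X v) '' A))
    (Δ : SComplex ((i : Fin c) × Fin (n i)))
    (hΔ : Δ.faces = {F | (∏ v ∈ F, (X v : MvPolynomial ((i : Fin c) × Fin (n i)) k)) ∉ I}) :
    Δ.VertexDecomposable := by
  have hΔ' : Δ = shiftedPolComplex n 0 A := by
    refine SComplex.ext (hΔ.trans (Set.ext fun F => ?_))
    simp [hI, prod_X_mem_span_prod_X_image_iff, mem_faces_shiftedPolComplex, shiftedPolSupp_zero]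
  exact hΔ' ▸ ⟨_, vDec_shiftedPolComplex n ⟨by simpa using hbound, hne, hprimary⟩⟩
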